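/- Suppose u ∈ U, h ∈ H, d ∈ D, and the measured output is y = W_y h + b_y + d. If ĉ ∈ Ĉ, ĥ ∈ H and d̂ ∈ D, then the observer update satisfies ĉ⁺ ∈ Ĉ, ĥ⁺ ∈ H and d̂⁺ ∈ D. Consequently, as long as the plant trajectory satisfies h_k ∈ H and d_k ∈ D for all k ≥ 0 and inputs remain in U, the set Î = Ĉ × H × D is positively invariant for the observer state (ĉ, ĥ, d̂). -/
import Mathlib


open Matrix Filter Set
open scoped ENNReal NNReal BigOperators

noncomputable section

namespace LSTMmpc

/-- The logistic sigmoid `σ(z) = 1/(1+e^{-z})`. -/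
def sigmoid (z : ℝ) : ℝ := 1 / (1 + Real.exp (-z))

/-- Euclidean norm of a finite real vector. -/
def enorm {k : ℕ} (v : Fin k → ℝ) : ℝ := Real.sqrt (∑ i, v i ^ 2)

/-- Sup (∞) norm of a finite real vector. -/
def vinf {k : ℕ} (v : Fin k → ℝ) : ℝ := ⨆ i, |v i|

/-- Spectral (ℓ²-induced) norm of a real matrix. -/
def spec {a b : ℕ} (M : Matrix (Fin a) (Fin b) ℝ) : ℝ :=
  ⨆ v : {v : Fin b → ℝ // enorm v ≤ 1}, enorm (M.mulVec v.1)

/-- Induced ∞-norm (maximum absolute row sum) of the horizontal block `[s•A, B, v]`. -/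
def rowNorm3 {n m : ℕ} (s : ℝ) (A : Matrix (Fin n) (Fin m) ℝ)
    (B : Matrix (Fin n) (Fin n) ℝ) (v : Fin n → ℝ) : ℝ :=
  ⨆ i, (∑ j, |s * A i j| + ∑ j, |B i j| + |v i|)

/-- Induced ∞-norm of the horizontal block `[s•A, B, v, C, t•D]`. -/
def rowNorm5 {n m p : ℕ} (s : ℝ) (A : Matrix (Fin n) (Fin m) ℝ)
    (B : Matrix (Fin n) (Fin n) ℝ) (v : Fin n → ℝ)
    (C : Matrix (Fin n) (Fin n) ℝ) (t : ℝ) (D : Matrix (Fin n) (Fin p) ℝ) : ℝ :=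
  ⨆ i, (∑ j, |s * A i j| + ∑ j, |B i j| + |v i| + ∑ j, |C i j| + ∑ j, |t * D i j|)

/-- Weighted norm `‖v‖_P = √(vᵀ P v)`. -/
def wnorm {k : ℕ} (P : Matrix (Fin k) (Fin k) ℝ) (v : Fin k → ℝ) : ℝ :=
  Real.sqrt (v ⬝ᵥ P.mulVec v)

/-- Minimum eigenvalue of a hermitian real matrix. -/
def lamMin {k : ℕ} (P : Matrix (Fin k) (Fin k) ℝ) (hP : P.IsHermitian) : ℝ :=
  ⨅ i, hP.eigenvalues i

/-- Maximum eigenvalue of a hermitian real matrix. -/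
def lamMax {k : ℕ} (P : Matrix (Fin k) (Fin k) ℝ) (hP : P.IsHermitian) : ℝ :=
  ⨆ i, hP.eigenvalues i

/-- Spectral radius (over `ℂ`) of a real square matrix. -/
def specRad {k : ℕ} (M : Matrix (Fin k) (Fin k) ℝ) : ℝ≥0∞ :=
  spectralRadius ℂ (M.map (fun x : ℝ => (x : ℂ)))

/-- Class `K∞` functions `[0,∞) → [0,∞)`. -/
def IsClassKInf (γ : ℝ → ℝ) : Prop :=
  ContinuousOn γ (Set.Ici 0) ∧ γ 0 = 0 ∧ StrictMonoOn γ (Set.Ici 0) ∧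
    (∀ s, 0 ≤ s → 0 ≤ γ s) ∧ Tendsto γ atTop atTop

/-- Class `KL` functions. -/
def IsClassKL (β : ℝ → ℕ → ℝ) : Prop :=
  (∀ k, ContinuousOn (fun s => β s k) (Set.Ici 0) ∧
      StrictMonoOn (fun s => β s k) (Set.Ici 0) ∧ β 0 k = 0) ∧
  (∀ s, 0 < s → StrictAnti (fun k => β s k) ∧ Tendsto (fun k => β s k) atTop (nhds 0)) ∧
  (∀ s, 0 ≤ s → ∀ k, 0 ≤ β s k)

/-- Weights of an LSTM network. -/
structure LSTM (n m p : ℕ) where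
  Wf : Matrix (Fin n) (Fin m) ℝ
  Wi : Matrix (Fin n) (Fin m) ℝ
  Wc : Matrix (Fin n) (Fin m) ℝ
  Wo : Matrix (Fin n) (Fin m) ℝ
  Uf : Matrix (Fin n) (Fin n) ℝ
  Ui : Matrix (Fin n) (Fin n) ℝ
  Uc : Matrix (Fin n) (Fin n) ℝ
  Uo : Matrix (Fin n) (Fin n) ℝ
  bf : Fin n → ℝ
  bi : Fin n → ℝ
  bc : Fin n → ℝ
  bo : Fin n → ℝ
  Wy : Matrix (Fin p) (Fin n) ℝ
  bY : Fin p → ℝ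

/-- LSTM state `(c, h)`. -/
abbrev State (n : ℕ) := (Fin n → ℝ) × (Fin n → ℝ)

/-- Augmented state `(c, h, d)`. -/
abbrev AugState (n p : ℕ) := (Fin n → ℝ) × (Fin n → ℝ) × (Fin p → ℝ)

variable {n m p : ℕ}

def stepC (S : LSTM n m p) (u : Fin m → ℝ) (c h : Fin n → ℝ) : Fin n → ℝ := fun j =>
  sigmoid ((S.Wf.mulVec u + S.Uf.mulVec h + S.bf) j) * c j +
    sigmoid ((S.Wi.mulVec u + S.Ui.mulVec h + S.bi) j) *
      Real.tanh ((S.Wc.mulVec u + S.Uc.mulVec h + S.bc) j)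

def stepH (S : LSTM n m p) (u : Fin m → ℝ) (c h : Fin n → ℝ) : Fin n → ℝ := fun j =>
  sigmoid ((S.Wo.mulVec u + S.Uo.mulVec h + S.bo) j) * Real.tanh (stepC S u c h j)

/-- One step of the LSTM dynamics `x⁺ = f(x, u)`. -/
def step (S : LSTM n m p) (x : State n) (u : Fin m → ℝ) : State n :=
  (stepC S u x.1 x.2, stepH S u x.1 x.2)

/-- Output map `g(x) = W_y h + b_y`. -/
def out (S : LSTM n m p) (x : State n) : Fin p → ℝ := S.Wy.mulVec x.2 + S.bY

/-- LSTM trajectory. -/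
def traj (S : LSTM n m p) (x0 : State n) (u : ℕ → Fin m → ℝ) : ℕ → State n
  | 0 => x0
  | k + 1 => step S (traj S x0 u k) (u k)

def sFb (S : LSTM n m p) (umax : ℝ) : ℝ := sigmoid (rowNorm3 umax S.Wf S.Uf S.bf)
def sIb (S : LSTM n m p) (umax : ℝ) : ℝ := sigmoid (rowNorm3 umax S.Wi S.Ui S.bi)
def sOb (S : LSTM n m p) (umax : ℝ) : ℝ := sigmoid (rowNorm3 umax S.Wo S.Uo S.bo)
def sCb (S : LSTM n m p) (umax : ℝ) : ℝ := Real.tanh (rowNorm3 umax S.Wc S.Uc S.bc)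
def sXb (S : LSTM n m p) (umax : ℝ) : ℝ :=
  Real.tanh (sIb S umax * sCb S umax / (1 - sFb S umax))
def alphaD (S : LSTM n m p) (umax : ℝ) : ℝ :=
  (1/4) * spec S.Uf * (sIb S umax * sCb S umax / (1 - sFb S umax)) +
    sIb S umax * spec S.Uc + (1/4) * spec S.Ui * sCb S umax
def betaD (S : LSTM n m p) (umax : ℝ) : ℝ :=
  (1/4) * spec S.Wf * (sIb S umax * sCb S umax / (1 - sFb S umax)) +
    sIb S umax * spec S.Wc + (1/4) * spec S.Wi * sCb S umax
def Adelta (S : LSTM n m p) (umax : ℝ) : Matrix (Fin 2) (Fin 2) ℝ :=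
  !![sFb S umax, alphaD S umax;
     sOb S umax * sFb S umax, alphaD S umax * sOb S umax + (1/4) * sXb S umax * spec S.Uo]
def Bdelta (S : LSTM n m p) (umax : ℝ) : Fin 2 → ℝ :=
  ![betaD S umax, betaD S umax * sOb S umax + (1/4) * sXb S umax * spec S.Wo]

def setU (m : ℕ) (umax : ℝ) : Set (Fin m → ℝ) := {u | vinf u ≤ umax}
def setH (n : ℕ) : Set (Fin n → ℝ) := {h | vinf h ≤ 1}
def setC (S : LSTM n m p) (umax : ℝ) : Set (Fin n → ℝ) :=
  {c | vinf c ≤ sIb S umax * sCb S umax / (1 - sFb S umax)}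
def setX (S : LSTM n m p) (umax : ℝ) : Set (State n) := (setC S umax) ×ˢ (setH n)
def setD (p : ℕ) (dmax : ℝ) : Set (Fin p → ℝ) := {d | vinf d ≤ dmax}

/-- Euclidean norm of the full state. -/
def xnorm {n : ℕ} (x : State n) : ℝ := Real.sqrt (∑ i, x.1 i ^ 2 + ∑ i, x.2 i ^ 2)

/-- Euclidean norm of the augmented state. -/
def chinorm {n p : ℕ} (χ : AugState n p) : ℝ :=
  Real.sqrt (∑ i, χ.1 i ^ 2 + ∑ i, χ.2.1 i ^ 2 + ∑ i, χ.2.2 i ^ 2)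

/-- Incremental input-to-state stability of the LSTM in `X` and `U`. -/
def deltaISS (S : LSTM n m p) (umax : ℝ) : Prop :=
  ∃ β γ, IsClassKL β ∧ IsClassKInf γ ∧
    ∀ (k : ℕ) (xa0 xb0 : State n), xa0 ∈ setX S umax → xb0 ∈ setX S umax →
      ∀ ua ub : ℕ → Fin m → ℝ,
        (∀ h < k, ua h ∈ setU m umax) → (∀ h < k, ub h ∈ setU m umax) →
        xnorm (traj S xa0 ua k - traj S xb0 ub k) ≤
          β (xnorm (xa0 - xb0)) k + γ (⨆ h ∈ Finset.range k, enorm (ua h - ub h))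

/-- Observer gains. -/
structure Gains (n p : ℕ) where
  Lf : Matrix (Fin n) (Fin p) ℝ
  Li : Matrix (Fin n) (Fin p) ℝ
  Lo : Matrix (Fin n) (Fin p) ℝ
  Ld : Matrix (Fin p) (Fin p) ℝ

/-- Componentwise saturation to `[-dmax, dmax]`. -/
def sat {p : ℕ} (dmax : ℝ) (v : Fin p → ℝ) : Fin p → ℝ := fun j =>
  min (max (v j) (-dmax)) dmax

/-- Observer output `ŷ = W_y ĥ + b_y + d̂`. -/
def yhat (S : LSTM n m p) (hh : Fin n → ℝ) (dh : Fin p → ℝ) : Fin p → ℝ :=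
  S.Wy.mulVec hh + S.bY + dh

def obsC (S : LSTM n m p) (G : Gains n p) (u : Fin m → ℝ) (y : Fin p → ℝ)
    (ch hh : Fin n → ℝ) (dh : Fin p → ℝ) : Fin n → ℝ := fun j =>
  sigmoid ((S.Wf.mulVec u + S.Uf.mulVec hh + S.bf + G.Lf.mulVec (y - yhat S hh dh)) j) * ch j +
    sigmoid ((S.Wi.mulVec u + S.Ui.mulVec hh + S.bi + G.Li.mulVec (y - yhat S hh dh)) j) *
      Real.tanh ((S.Wc.mulVec u + S.Uc.mulVec hh + S.bc) j)

def obsH (S : LSTM n m p) (G : Gains n p) (u : Fin m → ℝ) (y : Fin p → ℝ)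
    (ch hh : Fin n → ℝ) (dh : Fin p → ℝ) : Fin n → ℝ := fun j =>
  sigmoid ((S.Wo.mulVec u + S.Uo.mulVec hh + S.bo + G.Lo.mulVec (y - yhat S hh dh)) j) *
    Real.tanh (obsC S G u y ch hh dh j)

def obsD (S : LSTM n m p) (G : Gains n p) (dmax : ℝ) (y : Fin p → ℝ)
    (hh : Fin n → ℝ) (dh : Fin p → ℝ) : Fin p → ℝ :=
  sat dmax (dh + G.Ld.mulVec (y - yhat S hh dh))

/-- One step of the observer. -/
def obsStep (S : LSTM n m p) (G : Gains n p) (dmax : ℝ) (u : Fin m → ℝ) (y : Fin p → ℝ)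
    (χ : AugState n p) : AugState n p :=
  (obsC S G u y χ.1 χ.2.1 χ.2.2, obsH S G u y χ.1 χ.2.1 χ.2.2, obsD S G dmax y χ.2.1 χ.2.2)

/-- Observer trajectory. -/
def obsTraj (S : LSTM n m p) (G : Gains n p) (dmax : ℝ) (u : ℕ → Fin m → ℝ)
    (y : ℕ → Fin p → ℝ) (χ0 : AugState n p) : ℕ → AugState n p
  | 0 => χ0
  | k + 1 => obsStep S G dmax (u k) (y k) (obsTraj S G dmax u y χ0 k)

def sFh (S : LSTM n m p) (G : Gains n p) (umax dmax : ℝ) : ℝ :=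
  sigmoid (rowNorm5 umax S.Wf (S.Uf - G.Lf * S.Wy) S.bf (G.Lf * S.Wy) (2 * dmax) G.Lf)
def sIh (S : LSTM n m p) (G : Gains n p) (umax dmax : ℝ) : ℝ :=
  sigmoid (rowNorm5 umax S.Wi (S.Ui - G.Li * S.Wy) S.bi (G.Li * S.Wy) (2 * dmax) G.Li)
def sOh (S : LSTM n m p) (G : Gains n p) (umax dmax : ℝ) : ℝ :=
  sigmoid (rowNorm5 umax S.Wo (S.Uo - G.Lo * S.Wy) S.bo (G.Lo * S.Wy) (2 * dmax) G.Lo)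
def alphaH (S : LSTM n m p) (G : Gains n p) (umax : ℝ) : ℝ :=
  (1/4) * (sIb S umax * sCb S umax / (1 - sFb S umax)) * spec (S.Uf - G.Lf * S.Wy) +
    sIb S umax * spec S.Uc + (1/4) * sCb S umax * spec (S.Ui - G.Li * S.Wy)
def betaH (S : LSTM n m p) (G : Gains n p) (umax : ℝ) : ℝ :=
  (1/4) * (sIb S umax * sCb S umax / (1 - sFb S umax)) * spec G.Lf +
    (1/4) * sCb S umax * spec G.Li
def gammaH (S : LSTM n m p) (G : Gains n p) (umax dmax : ℝ) : ℝ :=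
  sOh S G umax dmax * alphaH S G umax + (1/4) * sXb S umax * spec (S.Uo - G.Lo * S.Wy)
def Ad (S : LSTM n m p) (G : Gains n p) (umax dmax : ℝ) : Matrix (Fin 3) (Fin 3) ℝ :=
  !![sFh S G umax dmax, alphaH S G umax, betaH S G umax;
     sOh S G umax dmax * sFh S G umax dmax, gammaH S G umax dmax,
       sOh S G umax dmax * betaH S G umax + (1/4) * sXb S umax * spec G.Lo;
     0, spec (G.Ld * S.Wy), spec ((1 : Matrix (Fin p) (Fin p) ℝ) - G.Ld)]

def setChat (S : LSTM n m p) (G : Gains n p) (umax dmax : ℝ) : Set (Fin n → ℝ) :=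
  {c | vinf c ≤ sIh S G umax dmax * sCb S umax / (1 - sFh S G umax dmax)}
def setIhat (S : LSTM n m p) (G : Gains n p) (umax dmax : ℝ) : Set (AugState n p) :=
  (setChat S G umax dmax) ×ˢ ((setH n) ×ˢ (setD p dmax))

/-- Incremental Lyapunov function for the LSTM. -/
def Vs {n : ℕ} (Ps : Matrix (Fin 2) (Fin 2) ℝ) (xa xb : State n) : ℝ :=
  wnorm Ps ![enorm (xa.1 - xb.1), enorm (xa.2 - xb.2)]

/-- Lyapunov function for the observer estimation error. -/
def Vo {n p : ℕ} (Po : Matrix (Fin 3) (Fin 3) ℝ) (χh χ : AugState n p) : ℝ :=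
  wnorm Po ![enorm (χh.1 - χ.1), enorm (χh.2.1 - χ.2.1), enorm (χh.2.2 - χ.2.2)]

/-- Disturbance-augmented LSTM update applied to the observer state. -/
def faug (S : LSTM n m p) (χ : AugState n p) (u : Fin m → ℝ) : AugState n p :=
  (stepC S u χ.1 χ.2.1, stepH S u χ.1 χ.2.1, χ.2.2)

def alphaBar (S : LSTM n m p) (G : Gains n p) (umax dmax : ℝ) : ℝ :=
  (1/4) * (sIh S G umax dmax * sCb S umax / (1 - sFh S G umax dmax)) * spec (G.Lf * S.Wy) +
    (1/4) * sCb S umax * spec (G.Li * S.Wy)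
def betaBar (S : LSTM n m p) (G : Gains n p) (umax dmax : ℝ) : ℝ :=
  (1/4) * (sIh S G umax dmax * sCb S umax / (1 - sFh S G umax dmax)) * spec G.Lf +
    (1/4) * sCb S umax * spec G.Li
def gammaBar (S : LSTM n m p) (G : Gains n p) (umax dmax : ℝ) : ℝ :=
  (1/4) * Real.tanh (sIh S G umax dmax * sCb S umax / (1 - sFh S G umax dmax))
def Lmat (S : LSTM n m p) (G : Gains n p) (umax dmax : ℝ) : Matrix (Fin 3) (Fin 3) ℝ :=
  !![0, alphaBar S G umax dmax, betaBar S G umax dmax;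
     0, gammaBar S G umax dmax * spec (G.Lo * S.Wy) + sOb S umax * alphaBar S G umax dmax,
       gammaBar S G umax dmax * spec G.Lo + sOb S umax * betaBar S G umax dmax;
     0, spec (G.Ld * S.Wy), spec G.Ld]



lemma sigmoid_pos' (z : ℝ) : 0 < sigmoid z := by
  unfold sigmoid; positivity

lemma sigmoid_lt_one' (z : ℝ) : sigmoid z < 1 := by
  unfold sigmoid
  rw [div_lt_one (by positivity)]
  linarith [Real.exp_pos (-z)]

lemma sigmoid_mono' : Monotone sigmoid := by
  intro a b hab
  unfold sigmoid
  apply one_div_le_one_div_of_le (by positivity)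
  have := Real.exp_le_exp.mpr (neg_le_neg hab)
  linarith

lemma tanh_eq' (x : ℝ) : Real.tanh x = 1 - 2 / (Real.exp (2 * x) + 1) := by
  rw [Real.tanh_eq_sinh_div_cosh, Real.sinh_eq, Real.cosh_eq]
  have h1 : Real.exp x > 0 := Real.exp_pos x
  have h3 : Real.exp (2 * x) = Real.exp x * Real.exp x := by
    rw [← Real.exp_add]; ring_nf
  have h4 : Real.exp (-x) = 1 / Real.exp x := by
    rw [Real.exp_neg]; exact (inv_eq_one_div _)
  rw [h3, h4]
  field_simp
  ring

lemma tanh_mono' : Monotone Real.tanh := by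
  intro a b hab
  rw [tanh_eq', tanh_eq']
  have : Real.exp (2 * a) ≤ Real.exp (2 * b) := Real.exp_le_exp.mpr (by linarith)
  have e1 := Real.exp_pos (2 * a)
  have : 2 / (Real.exp (2 * b) + 1) ≤ 2 / (Real.exp (2 * a) + 1) := by
    apply div_le_div_of_nonneg_left (by norm_num) (by positivity) (by linarith)
  linarith

lemma abs_tanh_le_one' (z : ℝ) : |Real.tanh z| ≤ 1 := by
  rw [abs_le, tanh_eq']
  have e1 := Real.exp_pos (2 * z)
  constructor
  · have : 2 / (Real.exp (2 * z) + 1) ≤ 2 := by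
      rw [div_le_iff₀ (by positivity)]; nlinarith
    linarith
  · have : 0 ≤ 2 / (Real.exp (2 * z) + 1) := by positivity
    linarith

lemma tanh_nonneg' {x : ℝ} (hx : 0 ≤ x) : 0 ≤ Real.tanh x := by
  have := tanh_mono' hx
  rwa [Real.tanh_zero] at this

lemma abs_tanh_le' {z M : ℝ} (h : |z| ≤ M) : |Real.tanh z| ≤ Real.tanh M := by
  have h1 : Real.tanh z ≤ Real.tanh M := tanh_mono' (le_trans (le_abs_self z) h)
  have h2 : Real.tanh (-M) ≤ Real.tanh z := tanh_mono' (by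
    have := neg_abs_le z; linarith [neg_le_neg h])
  rw [Real.tanh_neg] at h2
  rw [abs_le]; exact ⟨by linarith, h1⟩

lemma vinf_le' {k : ℕ} {v : Fin k → ℝ} {c : ℝ} (hc : 0 ≤ c) (h : ∀ i, |v i| ≤ c) :
    vinf v ≤ c := Real.iSup_le h hc

lemma abs_le_vinf' {k : ℕ} (v : Fin k → ℝ) (i : Fin k) : |v i| ≤ vinf v := by
  unfold vinf
  exact le_ciSup (Set.Finite.bddAbove (Set.finite_range fun i => |v i|)) i

lemma mulVec_abs_le' {a b : ℕ} (M : Matrix (Fin a) (Fin b) ℝ) (v : Fin b → ℝ) (r : ℝ)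
    (hv : ∀ j, |v j| ≤ r) (i : Fin a) : |M.mulVec v i| ≤ ∑ j, |M i j| * r := by
  have h0 : M.mulVec v i = ∑ j, M i j * v j := by
    simp [Matrix.mulVec, dotProduct]
  rw [h0]
  calc |∑ j, M i j * v j| ≤ ∑ j, |M i j * v j| := Finset.abs_sum_le_sum_abs _ _
    _ ≤ ∑ j, |M i j| * r := Finset.sum_le_sum fun j _ => by
        rw [abs_mul]; exact mul_le_mul_of_nonneg_left (hv j) (abs_nonneg _)

lemma row_le_rowNorm3' {n m : ℕ} (s : ℝ) (A : Matrix (Fin n) (Fin m) ℝ)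
    (B : Matrix (Fin n) (Fin n) ℝ) (v : Fin n → ℝ) (i : Fin n) :
    ∑ j, |s * A i j| + ∑ j, |B i j| + |v i| ≤ rowNorm3 s A B v := by
  unfold rowNorm3
  exact le_ciSup (Set.Finite.bddAbove (Set.finite_range
    fun i => ∑ j, |s * A i j| + ∑ j, |B i j| + |v i|)) i

lemma rowNorm3_nonneg' {n m : ℕ} (s : ℝ) (A : Matrix (Fin n) (Fin m) ℝ)
    (B : Matrix (Fin n) (Fin n) ℝ) (v : Fin n → ℝ) : 0 ≤ rowNorm3 s A B v :=
  Real.iSup_nonneg fun i => by positivity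

lemma row_le_rowNorm5' {n m p : ℕ} (s : ℝ) (A : Matrix (Fin n) (Fin m) ℝ)
    (B : Matrix (Fin n) (Fin n) ℝ) (v : Fin n → ℝ)
    (C : Matrix (Fin n) (Fin n) ℝ) (t : ℝ) (D : Matrix (Fin n) (Fin p) ℝ) (i : Fin n) :
    ∑ j, |s * A i j| + ∑ j, |B i j| + |v i| + ∑ j, |C i j| + ∑ j, |t * D i j|
      ≤ rowNorm5 s A B v C t D := by
  unfold rowNorm5
  exact le_ciSup (Set.Finite.bddAbove (Set.finite_range
    fun i => ∑ j, |s * A i j| + ∑ j, |B i j| + |v i| + ∑ j, |C i j| + ∑ j, |t * D i j|)) i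

lemma arg3_abs_le' {n m : ℕ} {umax : ℝ} (humax : 0 ≤ umax)
    (W : Matrix (Fin n) (Fin m) ℝ) (U : Matrix (Fin n) (Fin n) ℝ) (b : Fin n → ℝ)
    {u : Fin m → ℝ} {hh : Fin n → ℝ} (hu : vinf u ≤ umax) (hhh : vinf hh ≤ 1) (j : Fin n) :
    |(W.mulVec u + U.mulVec hh + b) j| ≤ rowNorm3 umax W U b := by
  have h1 : |W.mulVec u j| ≤ ∑ k, |W j k| * umax :=
    mulVec_abs_le' _ _ _ (fun k => (abs_le_vinf' u k).trans hu) j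
  have h2 : |U.mulVec hh j| ≤ ∑ k, |U j k| * 1 :=
    mulVec_abs_le' _ _ _ (fun k => (abs_le_vinf' hh k).trans hhh) j
  simp only [mul_one] at h2
  have e1 : ∑ k, |W j k| * umax = ∑ k, |umax * W j k| := by
    refine Finset.sum_congr rfl fun k _ => ?_
    rw [abs_mul, abs_of_nonneg humax, mul_comm]
  calc |(W.mulVec u + U.mulVec hh + b) j|
      ≤ |W.mulVec u j| + |U.mulVec hh j| + |b j| := by
        simp only [Pi.add_apply]; exact abs_add_three _ _ _
    _ ≤ ∑ k, |umax * W j k| + ∑ k, |U j k| + |b j| := by rw [← e1]; gcongr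
    _ ≤ rowNorm3 umax W U b := row_le_rowNorm3' _ _ _ _ j

lemma arg5_le' {n m p : ℕ} {umax dmax : ℝ} (humax : 0 ≤ umax) (hdmax : 0 ≤ dmax)
    (W : Matrix (Fin n) (Fin m) ℝ) (U : Matrix (Fin n) (Fin n) ℝ) (b : Fin n → ℝ)
    (L : Matrix (Fin n) (Fin p) ℝ) (Wy : Matrix (Fin p) (Fin n) ℝ) (bY : Fin p → ℝ)
    {u : Fin m → ℝ} {h hh : Fin n → ℝ} {d dh : Fin p → ℝ}
    (hu : vinf u ≤ umax) (hmem : vinf h ≤ 1) (hhh : vinf hh ≤ 1)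
    (hd1 : vinf d ≤ dmax) (hd2 : vinf dh ≤ dmax) (j : Fin n) :
    (W.mulVec u + U.mulVec hh + b +
        L.mulVec (Wy.mulVec h + bY + d - (Wy.mulVec hh + bY + dh))) j
      ≤ rowNorm5 umax W (U - L * Wy) b (L * Wy) (2 * dmax) L := by
  have veq : W.mulVec u + U.mulVec hh + b +
      L.mulVec (Wy.mulVec h + bY + d - (Wy.mulVec hh + bY + dh)) =
      W.mulVec u + (U - L * Wy).mulVec hh + b + (L * Wy).mulVec h + L.mulVec (d - dh) := by
    have e : Wy.mulVec h + bY + d - (Wy.mulVec hh + bY + dh)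
        = (Wy.mulVec h - Wy.mulVec hh) + (d - dh) := by abel
    rw [e, Matrix.mulVec_add, Matrix.mulVec_sub, Matrix.mulVec_mulVec,
      Matrix.sub_mulVec, Matrix.mulVec_mulVec]
    abel
  rw [veq]
  have h1 : |W.mulVec u j| ≤ ∑ k, |W j k| * umax :=
    mulVec_abs_le' _ _ _ (fun k => (abs_le_vinf' u k).trans hu) j
  have h2 : |(U - L * Wy).mulVec hh j| ≤ ∑ k, |(U - L * Wy) j k| * 1 :=
    mulVec_abs_le' _ _ _ (fun k => (abs_le_vinf' hh k).trans hhh) j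
  have h3 : |(L * Wy).mulVec h j| ≤ ∑ k, |(L * Wy) j k| * 1 :=
    mulVec_abs_le' _ _ _ (fun k => (abs_le_vinf' h k).trans hmem) j
  have h4 : |L.mulVec (d - dh) j| ≤ ∑ k, |L j k| * (2 * dmax) := by
    refine mulVec_abs_le' _ _ _ (fun k => ?_) j
    have := (abs_le_vinf' d k).trans hd1
    have := (abs_le_vinf' dh k).trans hd2
    have habs : |(d - dh) k| ≤ |d k| + |dh k| := by
      simp only [Pi.sub_apply, sub_eq_add_neg]
      exact (abs_add_le _ _).trans (by rw [abs_neg])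
    linarith
  simp only [mul_one] at h2 h3
  have e1 : ∑ k, |W j k| * umax = ∑ k, |umax * W j k| := by
    refine Finset.sum_congr rfl fun k _ => ?_
    rw [abs_mul, abs_of_nonneg humax, mul_comm]
  have e2 : ∑ k, |L j k| * (2 * dmax) = ∑ k, |2 * dmax * L j k| := by
    refine Finset.sum_congr rfl fun k _ => ?_
    rw [abs_mul, abs_of_nonneg (by linarith : (0:ℝ) ≤ 2 * dmax), mul_comm]
  calc (W.mulVec u + (U - L * Wy).mulVec hh + b + (L * Wy).mulVec h + L.mulVec (d - dh)) j
      = W.mulVec u j + (U - L * Wy).mulVec hh j + b j + (L * Wy).mulVec h j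
          + L.mulVec (d - dh) j := rfl
    _ ≤ |W.mulVec u j| + |(U - L * Wy).mulVec hh j| + |b j| + |(L * Wy).mulVec h j|
          + |L.mulVec (d - dh) j| := by
        gcongr <;> exact le_abs_self _
    _ ≤ ∑ k, |umax * W j k| + ∑ k, |(U - L * Wy) j k| + |b j| + ∑ k, |(L * Wy) j k|
          + ∑ k, |2 * dmax * L j k| := by
        rw [← e1, ← e2]; gcongr
    _ ≤ rowNorm5 umax W (U - L * Wy) b (L * Wy) (2 * dmax) L := row_le_rowNorm5' _ _ _ _ _ _ _ j

/-- the set `Î = Ĉ × H × D` is positively invariant for the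
observer (Lemma 3). -/
theorem statement6 {n m p : ℕ} (S : LSTM n m p) (G : Gains n p) (umax dmax : ℝ)
    (hu : 0 < umax) (hd : 0 < dmax) :
    (∀ u ∈ setU m umax, ∀ h ∈ setH n, ∀ d ∈ setD p dmax,
      ∀ ch ∈ setChat S G umax dmax, ∀ hh ∈ setH n, ∀ dh ∈ setD p dmax,
        obsC S G u (S.Wy.mulVec h + S.bY + d) ch hh dh ∈ setChat S G umax dmax ∧
        obsH S G u (S.Wy.mulVec h + S.bY + d) ch hh dh ∈ setH n ∧
        obsD S G dmax (S.Wy.mulVec h + S.bY + d) hh dh ∈ setD p dmax) ∧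
    (∀ (u : ℕ → Fin m → ℝ) (h : ℕ → Fin n → ℝ) (d : ℕ → Fin p → ℝ),
      (∀ k, u k ∈ setU m umax) → (∀ k, h k ∈ setH n) → (∀ k, d k ∈ setD p dmax) →
      ∀ χ0 ∈ setIhat S G umax dmax, ∀ k,
        obsTraj S G dmax u (fun k => S.Wy.mulVec (h k) + S.bY + d k) χ0 k ∈
          setIhat S G umax dmax) := by
  have hsCb : 0 ≤ sCb S umax := tanh_nonneg' (rowNorm3_nonneg' _ _ _ _)
  have hsFh1 : sFh S G umax dmax < 1 := sigmoid_lt_one' _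
  have hsFh0 : 0 < sFh S G umax dmax := sigmoid_pos' _
  have hsIh0 : 0 < sIh S G umax dmax := sigmoid_pos' _
  set r := sIh S G umax dmax * sCb S umax / (1 - sFh S G umax dmax) with hr
  have hrnn : 0 ≤ r := by
    apply div_nonneg (mul_nonneg hsIh0.le hsCb) (by linarith)
  have key : ∀ u ∈ setU m umax, ∀ h ∈ setH n, ∀ d ∈ setD p dmax,
      ∀ ch ∈ setChat S G umax dmax, ∀ hh ∈ setH n, ∀ dh ∈ setD p dmax,
        obsC S G u (S.Wy.mulVec h + S.bY + d) ch hh dh ∈ setChat S G umax dmax ∧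
        obsH S G u (S.Wy.mulVec h + S.bY + d) ch hh dh ∈ setH n ∧
        obsD S G dmax (S.Wy.mulVec h + S.bY + d) hh dh ∈ setD p dmax := by
    intro u hu' h hmem d hdm ch hch hh hhm dh hdhm
    simp only [setU, setH, setD, setChat, Set.mem_setOf_eq] at hu' hmem hdm hch hhm hdhm
    have hbC : ∀ j, |obsC S G u (S.Wy.mulVec h + S.bY + d) ch hh dh j| ≤ r := by
      intro j
      unfold obsC yhat
      set Af := (S.Wf.mulVec u + S.Uf.mulVec hh + S.bf +
        G.Lf.mulVec (S.Wy.mulVec h + S.bY + d - (S.Wy.mulVec hh + S.bY + dh))) j with hAf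
      set Ai := (S.Wi.mulVec u + S.Ui.mulVec hh + S.bi +
        G.Li.mulVec (S.Wy.mulVec h + S.bY + d - (S.Wy.mulVec hh + S.bY + dh))) j with hAi
      set Ac := (S.Wc.mulVec u + S.Uc.mulVec hh + S.bc) j with hAc
      have bf : sigmoid Af ≤ sFh S G umax dmax :=
        sigmoid_mono' (arg5_le' hu.le hd.le S.Wf S.Uf S.bf G.Lf S.Wy S.bY hu' hmem hhm hdm hdhm j)
      have bi : sigmoid Ai ≤ sIh S G umax dmax :=
        sigmoid_mono' (arg5_le' hu.le hd.le S.Wi S.Ui S.bi G.Li S.Wy S.bY hu' hmem hhm hdm hdhm j)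
      have bc : |Real.tanh Ac| ≤ sCb S umax :=
        abs_tanh_le' (arg3_abs_le' hu.le S.Wc S.Uc S.bc hu' hhm j)
      have bch : |ch j| ≤ r := (abs_le_vinf' ch j).trans hch
      have step1 : |sigmoid Af * ch j + sigmoid Ai * Real.tanh Ac|
          ≤ sFh S G umax dmax * r + sIh S G umax dmax * sCb S umax := by
        calc |sigmoid Af * ch j + sigmoid Ai * Real.tanh Ac|
            ≤ |sigmoid Af * ch j| + |sigmoid Ai * Real.tanh Ac| := abs_add_le _ _
          _ = sigmoid Af * |ch j| + sigmoid Ai * |Real.tanh Ac| := by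
              rw [abs_mul, abs_mul, abs_of_pos (sigmoid_pos' Af), abs_of_pos (sigmoid_pos' Ai)]
          _ ≤ sFh S G umax dmax * r + sIh S G umax dmax * sCb S umax := by
              gcongr <;> first
                | exact (sigmoid_pos' _).le
                | assumption
      have req : sFh S G umax dmax * r + sIh S G umax dmax * sCb S umax = r := by
        rw [hr]
        have h0 : (1 - sFh S G umax dmax) ≠ 0 := by linarith
        field_simp
        ring
      rw [req] at step1
      exact step1
    have hbH : ∀ j, |obsH S G u (S.Wy.mulVec h + S.bY + d) ch hh dh j| ≤ 1 := by
      intro j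
      unfold obsH
      rw [abs_mul]
      refine le_trans (mul_le_mul ?_ (abs_tanh_le_one' _) (abs_nonneg _) zero_le_one)
        (by norm_num)
      rw [abs_of_pos (sigmoid_pos' _)]
      exact (sigmoid_lt_one' _).le
    have hbD : ∀ j, |obsD S G dmax (S.Wy.mulVec h + S.bY + d) hh dh j| ≤ dmax := by
      intro j
      unfold obsD sat
      rw [abs_le]
      constructor
      · exact le_min (le_trans (by linarith) (le_max_right _ _)) (by linarith)
      · exact min_le_right _ _
    exact ⟨vinf_le' hrnn hbC, vinf_le' zero_le_one hbH, vinf_le' hd.le hbD⟩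
  refine ⟨key, ?_⟩
  intro u h d hu' hh' hd' χ0 hχ0 k
  induction k with
  | zero => exact hχ0
  | succ k ih =>
    simp only [setIhat, Set.mem_prod] at ih ⊢
    obtain ⟨h1, h2, h3⟩ := ih
    obtain ⟨k1, k2, k3⟩ := key (u k) (hu' k) (h k) (hh' k) (d k) (hd' k) _ h1 _ h2 _ h3
    exact ⟨k1, k2, k3⟩


end LSTMmpc
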